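/- Let Σ = {a_1 < a_2 < ⋯ < a_s} be an ordered alphabet and [w] a circular word over Σ. The matrix M = Ψ_Σ([w]) satisfies: M_{i,i} = 1 for 1 ≤ i ≤ s+1; M_{i,j} = 0 for 1 ≤ j < i ≤ s+1; and M_{i,j+1} = |[w]|_{a_i a_{i+1} ⋯ a_j} for 1 ≤ i ≤ j ≤ s. -/

import Mathlib

/-!
Since `Ψ(a w) = Ψ(a) Ψ(w)` and `Ψ(a_q)` differs from the identity only at `(q, q+1)`,
row `i` of `Ψ(a w)` is row `i` of `Ψ(w)` plus, when `a = a_i`, row `i+1` of `Ψ(w)`. This is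
exactly the recursion `|a t|_{b v} = |t|_{b v} + [a = b] |t|_v` for subword counts, so by
induction on the word `Ψ(u)` is upper unitriangular with `Ψ(u)_{i,j+1} = |u|_{a_i ⋯ a_j}`.
Averaging over the conjugacy class is linear in the entries, which gives the circular version.
-/

/-- The number of occurrences of `v` as a scattered subword (subsequence) of `w`:
the number of strictly increasing sequences of positions in `w` spelling out `v`. -/
def subwordCount {α : Type*} [DecidableEq α] (w v : List α) : ℕ :=
  w.sublists.count v

/-- The conjugacy class (circular word) `[w]` of `w`: the set of all cyclic shifts of `w`. -/
def conjClass {α : Type*} [DecidableEq α] (w : List α) : Finset (List α) :=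
  insert w ((Finset.range w.length).image w.rotate)

/-- The average subword count of `v` in the circular word `[w]`:
`|[w]|_v = (1/|[w]|) ∑_{u ∈ [w]} |u|_v`. -/
def circCount {α : Type*} [DecidableEq α] (w v : List α) : ℚ :=
  (∑ u ∈ conjClass w, (subwordCount u v : ℚ)) / ((conjClass w).card : ℚ)

/-- The Parikh matrix of the letter `q` of the ordered alphabet `Fin s`:
the identity matrix with an extra `1` in entry `(q, q+1)`. -/
def parikhLetter {s : ℕ} (q : Fin s) : Matrix (Fin (s + 1)) (Fin (s + 1)) ℚ :=
  1 + Matrix.single q.castSucc q.succ 1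

/-- The Parikh matrix mapping over the ordered alphabet `Fin s` (a monoid morphism). -/
def parikhMatrix {s : ℕ} (w : List (Fin s)) : Matrix (Fin (s + 1)) (Fin (s + 1)) ℚ :=
  (w.map parikhLetter).prod

/-- The Parikh matrix of the circular word `[w]`:
`Ψ([w]) = (1/|[w]|) ∑_{u ∈ [w]} Ψ(u)`. -/
def circParikh {s : ℕ} (w : List (Fin s)) : Matrix (Fin (s + 1)) (Fin (s + 1)) ℚ :=
  (((conjClass w).card : ℚ))⁻¹ • ∑ u ∈ conjClass w, parikhMatrix u

/-- The alternate matrix: `(i,j)` entry is `(-1)^(i+j)` times the `(i,j)` entry of `A`. -/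
def altMatrix {n : ℕ} (A : Matrix (Fin n) (Fin n) ℚ) : Matrix (Fin n) (Fin n) ℚ :=
  Matrix.of fun i j => (-1 : ℚ) ^ (i.val + j.val) * A i j

/-- The word `a_i a_{i+1} ⋯ a_j` over the ordered alphabet `Fin s`. -/
def segWord {s : ℕ} (i j : Fin s) : List (Fin s) :=
  (List.range (j.val - i.val + 1)).attach.map fun t =>
    ⟨i.val + t.1, by
      have ht := List.mem_range.mp t.2
      have hi := i.isLt
      have hj := j.isLt
      omega⟩

section Subwords

variable {α : Type*} [DecidableEq α]

theorem subwordCount_eq_count_sublists' (w v : List α) :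
    subwordCount w v = w.sublists'.count v :=
  (List.sublists_perm_sublists' w).count_eq v

theorem subwordCount_nil_right (w : List α) : subwordCount w [] = 1 := by
  induction w with
  | nil => rfl
  | cons a t ih =>
    rw [subwordCount_eq_count_sublists'] at ih ⊢
    rw [List.sublists'_cons, List.count_append, ih,
      List.count_eq_zero_of_not_mem (by simp)]

theorem subwordCount_nil_cons (b : α) (v : List α) : subwordCount [] (b :: v) = 0 := by
  simp [subwordCount]

theorem subwordCount_cons_cons (a b : α) (t v : List α) :
    subwordCount (a :: t) (b :: v) =
      subwordCount t (b :: v) + if b = a then subwordCount t v else 0 := by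
  simp only [subwordCount_eq_count_sublists', List.sublists'_cons, List.count_append]
  congr 1
  split_ifs with hba
  · subst hba
    exact List.count_map_of_injective _ _ List.cons_injective _
  · exact List.count_eq_zero_of_not_mem (by simp [Ne.symm hba])

end Subwords

section Parikh

variable {s : ℕ}

/-- The word `a_i a_{i+1} ⋯ a_{j-1}`; it is empty when `j ≤ i`. -/
def intervalWord (i j : Fin (s + 1)) : List (Fin s) :=
  (List.range (j.val - i.val)).attach.map fun t =>
    ⟨i.val + t.1, by have := List.mem_range.mp t.2; have := j.isLt; omega⟩

theorem intervalWord_self (i : Fin (s + 1)) : intervalWord i i = [] := by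
  simp [intervalWord]

theorem exists_intervalWord_eq_cons {i j : Fin (s + 1)} (hij : i < j) :
    ∃ a : Fin s, i = a.castSucc ∧ intervalWord i j = a :: intervalWord a.succ j := by
  have hij' : i.val < j.val := hij
  refine ⟨⟨i.val, by omega⟩, rfl, List.ext_getElem ?_ fun n _ _ => ?_⟩
  · simp only [intervalWord, List.length_map, List.length_attach, List.length_range,
      List.length_cons, Fin.val_succ]
    omega
  · rcases n with _ | n
    · simp [intervalWord]
    · simp only [intervalWord, List.getElem_map, List.getElem_attach, List.getElem_cons_succ]
      ext
      simp only [Fin.val_succ, List.getElem_range]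
      omega

theorem segWord_eq_intervalWord {i j : Fin s} (hij : i ≤ j) :
    segWord i j = intervalWord i.castSucc j.succ := by
  have hij' : i.val ≤ j.val := hij
  refine List.ext_getElem ?_ fun n _ _ => ?_
  · simp only [segWord, intervalWord, List.length_map, List.length_attach, List.length_range,
      Fin.val_castSucc, Fin.val_succ]
    omega
  · simp [segWord, intervalWord]

theorem parikhMatrix_cons (a : Fin s) (w : List (Fin s)) :
    parikhMatrix (a :: w) = parikhLetter a * parikhMatrix w :=
  List.prod_cons

theorem parikhMatrix_cons_apply (a : Fin s) (w : List (Fin s)) (i j : Fin (s + 1)) :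
    parikhMatrix (a :: w) i j =
      parikhMatrix w i j + if i = a.castSucc then parikhMatrix w a.succ j else 0 := by
  rw [parikhMatrix_cons, parikhLetter, Matrix.add_mul,
    Matrix.one_mul, Matrix.add_apply]
  split_ifs with hi
  · rw [hi, Matrix.single_mul_apply_same, one_mul]
  · rw [Matrix.single_mul_apply_of_ne (h := hi)]

theorem parikhMatrix_apply_of_lt (w : List (Fin s)) {i j : Fin (s + 1)} (hji : j < i) :
    parikhMatrix w i j = 0 := by
  induction w generalizing i with
  | nil => simp [parikhMatrix, hji.ne']
  | cons a t ih =>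
    rw [parikhMatrix_cons_apply, ih hji]
    split_ifs with hi
    · subst hi
      rw [ih (hji.trans Fin.castSucc_lt_succ), add_zero]
    · rw [add_zero]

theorem parikhMatrix_apply_of_le (w : List (Fin s)) {i j : Fin (s + 1)} (hij : i ≤ j) :
    parikhMatrix w i j = subwordCount w (intervalWord i j) := by
  induction w generalizing i with
  | nil =>
    rcases hij.eq_or_lt with rfl | hlt
    · simp [parikhMatrix, intervalWord_self, subwordCount_nil_right]
    · obtain ⟨a, rfl, hw⟩ := exists_intervalWord_eq_cons hlt
      simp [parikhMatrix, hw, subwordCount_nil_cons, hlt.ne]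
  | cons b t ih =>
    rw [parikhMatrix_cons_apply, ih hij]
    rcases hij.eq_or_lt with rfl | hlt
    · simp only [intervalWord_self, subwordCount_nil_right]
      split_ifs with hi
      · subst hi
        rw [parikhMatrix_apply_of_lt t Fin.castSucc_lt_succ, add_zero]
      · rw [add_zero]
    · obtain ⟨a, rfl, hw⟩ := exists_intervalWord_eq_cons hlt
      simp only [hw, subwordCount_cons_cons, Nat.cast_add, Fin.castSucc_inj]
      split_ifs with hab
      · rw [← hab, ih (Fin.castSucc_lt_iff_succ_le.mp hlt)]
      · rw [Nat.cast_zero]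

theorem parikhMatrix_apply_self (w : List (Fin s)) (i : Fin (s + 1)) :
    parikhMatrix w i i = 1 := by
  rw [parikhMatrix_apply_of_le w le_rfl, intervalWord_self, subwordCount_nil_right, Nat.cast_one]

end Parikh

theorem conjClass_card_ne_zero {α : Type*} [DecidableEq α] (w : List α) :
    (conjClass w).card ≠ 0 :=
  Finset.card_ne_zero_of_mem (Finset.mem_insert_self w _)

theorem circParikh_apply {s : ℕ} (w : List (Fin s)) (i j : Fin (s + 1)) :
    circParikh w i j = ((conjClass w).card : ℚ)⁻¹ * ∑ u ∈ conjClass w, parikhMatrix u i j := by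
  simp only [circParikh, Matrix.smul_apply, Matrix.sum_apply, smul_eq_mul]

/-- Theorem 17: the entries of the Parikh matrix `M = Ψ_Σ([w])` of a circular word `[w]` over
`{a_1 < ⋯ < a_s} = Fin s`: unit diagonal, zero below the diagonal, and
`M_{i,j+1} = |[w]|_{a_i a_{i+1} ⋯ a_j}` for `i ≤ j`. -/
theorem stmt_5 (s : ℕ) (w : List (Fin s)) :
    (∀ i : Fin (s + 1), circParikh w i i = 1) ∧
    (∀ i j : Fin (s + 1), j < i → circParikh w i j = 0) ∧
    (∀ i j : Fin s, i ≤ j →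
      circParikh w i.castSucc j.succ = circCount w (segWord i j)) := by
  refine ⟨fun i => ?_, fun i j hji => ?_, fun i j hij => ?_⟩
  · simp only [circParikh_apply, parikhMatrix_apply_self, Finset.sum_const, nsmul_eq_mul, mul_one]
    exact inv_mul_cancel₀ (Nat.cast_ne_zero.mpr (conjClass_card_ne_zero w))
  · simp only [circParikh_apply, parikhMatrix_apply_of_lt _ hji, Finset.sum_const_zero, mul_zero]
  · have hle : i.castSucc ≤ j.succ := (Fin.castSucc_le_castSucc_iff.mpr hij).trans
      Fin.castSucc_lt_succ.le
    rw [circParikh_apply, circCount, div_eq_inv_mul, segWord_eq_intervalWord hij]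
    simp only [parikhMatrix_apply_of_le _ hle]
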